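/- For every x ∈ ℝ, lim_n F(a_n x + b_n)^n = Λ(x). That is, generalized Weibull distributions belong to the domain of attraction for maxima of the Gumbel law, with norming constants a_n and b_n. -/

import Mathlib

/-!
Write `q_n = a_n x + b_n = b_n (1 + u_n)` with `u_n = a_n x / b_n → 0`. Since `1 - F(b_n) = 1/n`,
`n (1 - F(q_n))` is the tail ratio `(1 + u_n)^α exp(-C b_n^τ ((1 + u_n)^τ - 1))`, in which `K`
cancels. The choice of `a_n` makes `C b_n^τ · a_n / b_n → 1/τ`, so the first-order expansion
`(1 + u)^τ - 1 ~ τ u` sends the exponent to `x`. Thus `n (1 - F(q_n)) → e^{-x}`, and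
`(1 - e^{-x}/n + o(1/n))^n → exp(-e^{-x})`.
-/

open Filter Set Real Topology

variable {ι : Type*} {l : Filter ι}

theorem tendsto_atTop_of_antitoneOn_of_tendsto_zero {f : ℝ → ℝ} {x₁ : ℝ}
    (hf : AntitoneOn f (Ici x₁)) (hpos : ∀ x ≥ x₁, 0 < f x) {b : ι → ℝ}
    (hb : ∀ᶠ i in l, x₁ ≤ b i) (hfb : Tendsto (fun i => f (b i)) l (𝓝 0)) :
    Tendsto b l atTop := by
  rw [tendsto_atTop]
  intro M
  have hM : x₁ ≤ max M x₁ := le_max_right M x₁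
  filter_upwards [hb, hfb.eventually_lt_const (hpos _ hM)] with i hbi hfbi
  by_contra! hlt
  exact (hf hbi hM (hlt.le.trans (le_max_left M x₁))).not_gt hfbi

theorem tendsto_dslope_one_add_rpow (τ : ℝ) {u : ι → ℝ} (hu : Tendsto u l (𝓝 0)) :
    Tendsto (fun i => dslope (fun v : ℝ => (1 + v) ^ τ) 0 (u i)) l (𝓝 τ) := by
  have hderiv : HasDerivAt (fun v : ℝ => (1 + v) ^ τ) τ 0 := by
    simpa using ((hasDerivAt_id (0 : ℝ)).const_add 1).rpow_const (p := τ) (by simp)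
  have hcont := continuousAt_dslope_same.2 hderiv.differentiableAt
  rw [ContinuousAt, dslope_same, hderiv.deriv] at hcont
  exact hcont.comp hu

theorem tendsto_mul_inv_mul_sub {τ α : ℝ} (hτ : 0 < τ) {y : ι → ℝ} (hy : Tendsto y l atTop) :
    Tendsto (fun i => y i * (τ * y i - α)⁻¹) l (𝓝 τ⁻¹) := by
  have h : Tendsto (fun i => (τ - α * (y i)⁻¹)⁻¹) l (𝓝 τ⁻¹) := by
    simpa using ((hy.inv_tendsto_atTop.const_mul α).const_sub τ).inv₀ (by simpa using hτ.ne')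
  refine h.congr' ?_
  filter_upwards [hy.eventually_gt_atTop 0] with i hi
  field_simp

theorem tendsto_mul_one_add_rpow_sub_one (τ : ℝ) {c : ℝ} {y u : ι → ℝ}
    (hu : Tendsto u l (𝓝 0)) (hyu : Tendsto (fun i => y i * u i) l (𝓝 c)) :
    Tendsto (fun i => y i * ((1 + u i) ^ τ - 1)) l (𝓝 (c * τ)) := by
  refine (hyu.mul (tendsto_dslope_one_add_rpow τ hu)).congr fun i => ?_
  have hslope := sub_smul_dslope (fun v : ℝ => (1 + v) ^ τ) 0 (u i)
  simp only [sub_zero, add_zero, one_rpow, smul_eq_mul] at hslope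
  rw [mul_assoc, hslope]

section Norming

variable {C α τ : ℝ} {a b : ι → ℝ}

theorem inv_eventuallyEq_norming_div (hb : Tendsto b l atTop)
    (ha : ∀ i, a i = 1 / (C * τ * b i ^ (τ - 1) - α / b i)) :
    (fun i => (τ * (C * b i ^ τ) - α)⁻¹) =ᶠ[l] fun i => a i / b i := by
  filter_upwards [hb.eventually_gt_atTop 0] with i hi
  rw [ha, rpow_sub_one hi.ne']
  field_simp

theorem tendsto_norming_div_mul (hC : 0 < C) (hτ : 0 < τ) (hb : Tendsto b l atTop)
    (ha : ∀ i, a i = 1 / (C * τ * b i ^ (τ - 1) - α / b i)) (x : ℝ) :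
    Tendsto (fun i => a i / b i * x) l (𝓝 0) := by
  have hy : Tendsto (fun i => C * b i ^ τ) l atTop :=
    ((tendsto_rpow_atTop hτ).comp hb).const_mul_atTop hC
  have hr := (tendsto_atTop_add_const_right _ (-α) (hy.const_mul_atTop hτ)).inv_tendsto_atTop
  simpa using (hr.congr' (inv_eventuallyEq_norming_div hb ha)).mul_const x

theorem tendsto_norming_exponent (hC : 0 < C) (hτ : 0 < τ) (hb : Tendsto b l atTop)
    (ha : ∀ i, a i = 1 / (C * τ * b i ^ (τ - 1) - α / b i)) (x : ℝ) :
    Tendsto (fun i => C * b i ^ τ * ((1 + a i / b i * x) ^ τ - 1)) l (𝓝 x) := by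
  have hy : Tendsto (fun i => C * b i ^ τ) l atTop :=
    ((tendsto_rpow_atTop hτ).comp hb).const_mul_atTop hC
  have hyu : Tendsto (fun i => C * b i ^ τ * (a i / b i * x)) l (𝓝 (τ⁻¹ * x)) := by
    refine ((tendsto_mul_inv_mul_sub (α := α) hτ hy).mul_const x).congr' ?_
    filter_upwards [inv_eventuallyEq_norming_div hb ha] with i hi
    rw [hi, mul_assoc]
  convert tendsto_mul_one_add_rpow_sub_one τ (tendsto_norming_div_mul hC hτ hb ha x) hyu using 2
  field_simp

end Norming

noncomputable def weibullTail (K C α τ x : ℝ) : ℝ := K * x ^ α * exp (-C * x ^ τ)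

theorem weibullTail_mul_one_add_div {K C α τ b u : ℝ} (hK : K ≠ 0) (hb : 0 < b)
    (hu : 0 ≤ 1 + u) :
    weibullTail K C α τ (b * (1 + u)) / weibullTail K C α τ b =
      (1 + u) ^ α * exp (-(C * b ^ τ * ((1 + u) ^ τ - 1))) := by
  have hexp : exp (-C * (b ^ τ * (1 + u) ^ τ)) =
      exp (-C * b ^ τ) * exp (-(C * b ^ τ * ((1 + u) ^ τ - 1))) := by
    rw [← exp_add]
    ring_nf
  have hbα : b ^ α ≠ 0 := (rpow_pos_of_pos hb α).ne'
  simp only [weibullTail, mul_rpow hb.le hu, hexp]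
  field_simp

theorem tendsto_weibullTail_mul_one_add_div {K C α τ x : ℝ} (hK : K ≠ 0) {b u : ι → ℝ}
    (hb : ∀ᶠ i in l, 0 < b i) (hu : Tendsto u l (𝓝 0))
    (hexp : Tendsto (fun i => C * b i ^ τ * ((1 + u i) ^ τ - 1)) l (𝓝 x)) :
    Tendsto (fun i => weibullTail K C α τ (b i * (1 + u i)) / weibullTail K C α τ (b i)) l
      (𝓝 (exp (-x))) := by
  have hu1 : Tendsto (fun i => 1 + u i) l (𝓝 1) := by simpa using hu.const_add 1
  have h := (hu1.rpow_const (p := α) (.inl one_ne_zero)).mul hexp.neg.rexp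
  rw [one_rpow, one_mul] at h
  refine h.congr' ?_
  filter_upwards [hb, hu1.eventually_const_le zero_lt_one] with i hbi hui
  exact (weibullTail_mul_one_add_div hK hbi hui).symm

theorem stmt_18_general (K C α τ x₁ : ℝ) (hK : 0 < K) (hC : 0 < C) (hτ : 1 ≤ τ)
    (hanti : StrictAntiOn (fun x : ℝ => K * x ^ α * Real.exp (-C * x ^ τ)) (Set.Ici x₁))
    (hrange : ∀ x ≥ x₁, K * x ^ α * Real.exp (-C * x ^ τ) ∈ Set.Ioc (0 : ℝ) 1)
    (F : ℝ → ℝ) (hF : ∀ x ≥ x₁, F x = 1 - K * x ^ α * Real.exp (-C * x ^ τ))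
    (b : ℕ → ℝ)
    (hb : ∀ᶠ n : ℕ in atTop,
      x₁ ≤ b n ∧ K * b n ^ α * Real.exp (-C * b n ^ τ) = 1 / (n : ℝ))
    (a : ℕ → ℝ) (ha : ∀ n, a n = 1 / (C * τ * b n ^ (τ - 1) - α / b n)) :
    ∀ x : ℝ,
      Tendsto (fun n : ℕ => F (a n * x + b n) ^ n) atTop
        (nhds (Real.exp (-Real.exp (-x)))) := by
  intro x
  have hτ0 : 0 < τ := zero_lt_one.trans_le hτ
  have hbtop : Tendsto b atTop atTop :=
    tendsto_atTop_of_antitoneOn_of_tendsto_zero hanti.antitoneOn (fun y hy => (hrange y hy).1)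
      (hb.mono fun _ h => h.1)
      (tendsto_one_div_atTop_nhds_zero_nat.congr' (hb.mono fun _ h => h.2.symm))
  have hbpos : ∀ᶠ n in atTop, 0 < b n := hbtop.eventually_gt_atTop 0
  have hu := tendsto_norming_div_mul hC hτ0 hbtop ha x
  have htail := tendsto_weibullTail_mul_one_add_div (α := α) hK.ne' hbpos hu
    (tendsto_norming_exponent hC hτ0 hbtop ha x)
  have hq : Tendsto (fun n => b n * (1 + a n / b n * x)) atTop atTop :=
    hbtop.atTop_mul_pos one_pos (by simpa using hu.const_add 1)
  refine (tendsto_one_add_pow_exp_of_tendsto (g := fun n => F (a n * x + b n) - 1) ?_).congr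
    fun n => by simp
  -- the tail at `b n` is `1 / n`, so `n (F (q n) - 1)` is minus the tail ratio
  refine htail.neg.congr' ?_
  filter_upwards [hb, hbpos, hq.eventually_ge_atTop x₁, eventually_ne_atTop 0]
    with n hbn hbn_pos hqn hn
  have hqeq : b n * (1 + a n / b n * x) = a n * x + b n := by field_simp; ring
  rw [hqeq] at hqn ⊢
  rw [hF _ hqn, weibullTail, weibullTail, hbn.2]
  field_simp
  ring

/-- Generalized Weibull distributions belong to the domain of attraction for maxima
of the Gumbel law: with the canonical norming constants `a_n`, `b_n`, for every `x`,
`F(a_n x + b_n)^n → Λ(x) = exp(-e^{-x})`. -/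
theorem stmt_18 (K C α τ x₁ : ℝ) (hK : 0 < K) (hC : 0 < C) (hα : 0 < α) (hτ : 1 ≤ τ)
    (hx₁ : 0 < x₁)
    (hanti : StrictAntiOn (fun x : ℝ => K * x ^ α * Real.exp (-C * x ^ τ)) (Set.Ici x₁))
    (hlim : Tendsto (fun x : ℝ => K * x ^ α * Real.exp (-C * x ^ τ)) atTop (nhds 0))
    (hrange : ∀ x ≥ x₁, K * x ^ α * Real.exp (-C * x ^ τ) ∈ Set.Ioc (0 : ℝ) 1)
    (F : ℝ → ℝ) (hF : ∀ x ≥ x₁, F x = 1 - K * x ^ α * Real.exp (-C * x ^ τ))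
    (b : ℕ → ℝ)
    (hb : ∀ᶠ n : ℕ in atTop,
      x₁ ≤ b n ∧ K * b n ^ α * Real.exp (-C * b n ^ τ) = 1 / (n : ℝ))
    (a : ℕ → ℝ) (ha : ∀ n, a n = 1 / (C * τ * b n ^ (τ - 1) - α / b n)) :
    ∀ x : ℝ,
      Tendsto (fun n : ℕ => F (a n * x + b n) ^ n) atTop
        (nhds (Real.exp (-Real.exp (-x)))) :=
  stmt_18_general K C α τ x₁ hK hC hτ hanti hrange F hF b hb a ha
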